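/- Let ε ∈ ℂ be a primitive cube root of unity, α, β, γ ∈ ℂ, and p₁ = (0, (εβ − γ)/(1 − ε), 0, (β − γ)/(ε(1 − ε))), p₂ = (0, (ε²α − γ)/(1 − ε²), 0, (α − γ)/(1 − ε²)), p₃ = (0, (εα − β)/(1 − ε), 0, (α − β)/(1 − ε)) ∈ ℂ⁴. Then the following are equivalent: p₁ = p₂; p₂ = p₃; p₁ = p₃; α + εβ + ε²γ = 0. In particular, if α + εβ + ε²γ = 0 then p₁ = p₂ = p₃, while if α + εβ + ε²γ ≠ 0 the three points are pairwise distinct and at each of them the 4×4 Hessian matrix of G(X,Y,U,V) = X² − U² − (Y − V + α)(Y − εV + β)(Y − ε²V + γ) is invertible (each is an ordinary double point). -/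

import Mathlib

open MvPolynomial

/-- The deformation `G = X² − U² − (Y − V + α)(Y − εV + β)(Y − ε²V + γ)` of the threefold
cusp respecting the factorization `(X−U)(X+U) = (Y−V)(Y−εV)(Y−ε²V)`, with variables
`X = X 0`, `Y = X 1`, `U = X 2`, `V = X 3`. -/
noncomputable def G (ε α β γ : ℂ) : MvPolynomial (Fin 4) ℂ :=
  X 0 ^ 2 - X 2 ^ 2 -
    (X 1 - X 3 + C α) * (X 1 - C ε * X 3 + C β) * (X 1 - C (ε ^ 2) * X 3 + C γ)
/-- The Hessian matrix of second partial derivatives of `G` at a point `p ∈ ℂ⁴`. -/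
noncomputable def hessG (ε α β γ : ℂ) (p : Fin 4 → ℂ) : Matrix (Fin 4) (Fin 4) ℂ :=
  Matrix.of fun i j => eval p (pderiv i (pderiv j (G ε α β γ)))

lemma pd_two' (i : Fin 4) : pderiv i (2 : MvPolynomial (Fin 4) ℂ) = 0 := by
  rw [show (2 : MvPolynomial (Fin 4) ℂ) = C 2 from (map_ofNat C 2).symm]
  simp

set_option maxHeartbeats 2000000 in
lemma hess_eq' (ε α β γ : ℂ) (p : Fin 4 → ℂ) :
    hessG ε α β γ p =
      !![2,0,0,0;
         0, -2*((p 1-p 3+α)+(p 1-ε*p 3+β)+(p 1-ε^2*p 3+γ)), 0,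
           (ε+ε^2)*(p 1-p 3+α)+(1+ε^2)*(p 1-ε*p 3+β)+(1+ε)*(p 1-ε^2*p 3+γ);
         0,0,-2,0;
         0, (ε+ε^2)*(p 1-p 3+α)+(1+ε^2)*(p 1-ε*p 3+β)+(1+ε)*(p 1-ε^2*p 3+γ), 0,
           -2*(ε^3*(p 1-p 3+α)+ε^2*(p 1-ε*p 3+β)+ε*(p 1-ε^2*p 3+γ))] := by
  ext i j
  fin_cases i <;> fin_cases j <;>
    (simp [hessG, G, pderiv_X, pderiv_mul, pderiv_pow, pd_two', map_sub, map_add,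
      Matrix.vecHead, Matrix.vecTail]; try ring)

lemma det1' (ε α β γ y v : ℂ) (hq : ε^2+ε+1=0)
    (hy : (1-ε)*y = ε*β-γ) (hv : ε*(1-ε)*v = β-γ) :
    (hessG ε α β γ ![0,y,0,v]).det = -12*(α+ε*β+ε^2*γ)^2 := by
  rw [hess_eq']
  simp [Matrix.det_succ_row_zero, Fin.sum_univ_succ]
  linear_combination ((96:ℂ)*v + ((32:ℂ)/3)*y + (32:ℂ)*β + (-32:ℂ)*α + (48:ℂ)*ε*v + ((16:ℂ)/3)*ε*y + (-32:ℂ)*ε*γ + (48:ℂ)*ε*β + (-16:ℂ)*ε*α + (-16:ℂ)*ε^2*γ + (16:ℂ)*ε^2*β + ((-32:ℂ)/3)*ε^3*y + ((-16:ℂ)/3)*ε^4*y) * hy + ((16:ℂ)*γ + (-16:ℂ)*α + (48:ℂ)*ε*γ + (-16:ℂ)*ε*β + (-32:ℂ)*ε*α + (32:ℂ)*ε^2*γ + (-32:ℂ)*ε^2*β) * hv + ((-96:ℂ)*y*v + ((16:ℂ)/3)*y^2 + (-96:ℂ)*γ*v + ((16:ℂ)/3)*γ*y + (-12:ℂ)*γ^2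 + (-16:ℂ)*β*y + (-8:ℂ)*β*γ + (4:ℂ)*β^2 + (32:ℂ)*α*y + (48:ℂ)*α*γ + (-16:ℂ)*α*β + (12:ℂ)*α^2 + (128:ℂ)*ε*y*v + (-16:ℂ)*ε*y^2 + (32:ℂ)*ε*γ*v + ((-32:ℂ)/3)*ε*γ*y + (-12:ℂ)*ε*γ^2 + (80:ℂ)*ε*β*v + ((32:ℂ)/3)*ε*β*y + (16:ℂ)*ε*β*γ + (12:ℂ)*ε*β^2 + (16:ℂ)*ε*α*v + (-48:ℂ)*ε*α*y + (-8:ℂ)*ε*α*γ + (-16:ℂ)*ε*α*β + (-12:ℂ)*ε*α^2 + (16:ℂ)*ε^2*v^2 + (-16:ℂ)*ε^2*y*v + (16:ℂ)*ε^2*y^2 + (16:ℂ)*ε^2*γ*v + ((16:ℂ)/3)*ε^2*γ*y + (12:ℂ)*ε^2*γ^2 + (-16:ℂ)*ε^2*β*v + ((32:ℂ)/3)*ε^2*β*y + (4:ℂ)*ε^2*β^2 + (-16:ℂ)*ε^2*α*v + (16:ℂ)*ε^2*α*y + (8:ℂ)*ε^2*α*β + (4:ℂ)*ε^2*α^2 +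 (-32:ℂ)*ε^3*v^2 + (-16:ℂ)*ε^3*y*v + ((-16:ℂ)/3)*ε^3*y^2 + (-16:ℂ)*ε^3*β*v + ((-16:ℂ)/3)*ε^3*β*y + (16:ℂ)*ε^4*v^2) * hq

lemma det2' (ε α β γ y v : ℂ) (hq : ε^2+ε+1=0)
    (hy : (1-ε^2)*y = ε^2*α-γ) (hv : (1-ε^2)*v = α-γ) :
    (hessG ε α β γ ![0,y,0,v]).det = -12*(α+ε*β+ε^2*γ)^2 := by
  rw [hess_eq']
  simp [Matrix.det_succ_row_zero, Fin.sum_univ_succ]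
  linear_combination ((48:ℂ)*v + ((16:ℂ)/3)*y + (16:ℂ)*β + (-16:ℂ)*α + (-48:ℂ)*ε*v + ((-16:ℂ)/3)*ε*y + (-16:ℂ)*ε*γ + (16:ℂ)*ε*α + (16:ℂ)*ε^2*γ + (-16:ℂ)*ε^2*β + ((-16:ℂ)/3)*ε^3*y + ((16:ℂ)/3)*ε^4*y) * hy + ((16:ℂ)*β + (-16:ℂ)*α + (16:ℂ)*ε*γ + (-16:ℂ)*ε*β + (-16:ℂ)*ε^2*γ + (16:ℂ)*ε^2*α) * hv + ((-48:ℂ)*y*v + ((32:ℂ)/3)*y^2 + (-48:ℂ)*γ*v + ((32:ℂ)/3)*γ*y + (4:ℂ)*γ^2 + (-16:ℂ)*β*v + (-24:ℂ)*β*γ + (4:ℂ)*β^2 + (16:ℂ)*α*v + (16:ℂ)*α*y + (32:ℂ)*α*γ + (16:ℂ)*α*β + (-4:ℂ)*α^2 + (80:ℂ)*ε*y*v + ((-64:ℂ)/3)*ε*y^2 + (80:ℂ)*ε*γ*v + ((-64:ℂ)/3)*ε*γ*y + (-12:ℂ)*ε*γ^2 + (16:ℂ)*ε*β*v + (32:ℂ)*ε*β*γ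 + (-4:ℂ)*ε*β^2 + (-16:ℂ)*ε*α*v + (-32:ℂ)*ε*α*y + (-40:ℂ)*ε*α*γ + (4:ℂ)*ε*α^2 + (16:ℂ)*ε^2*v^2 + (-16:ℂ)*ε^2*y*v + (16:ℂ)*ε^2*y^2 + (-32:ℂ)*ε^2*γ*v + ((32:ℂ)/3)*ε^2*γ*y + (12:ℂ)*ε^2*γ^2 + (16:ℂ)*ε^2*β*v + (4:ℂ)*ε^2*β^2 + ((64:ℂ)/3)*ε^2*α*y + (16:ℂ)*ε^2*α*γ + (-8:ℂ)*ε^2*α*β + (4:ℂ)*ε^2*α^2 + (-32:ℂ)*ε^3*v^2 + (-16:ℂ)*ε^3*y*v + ((-32:ℂ)/3)*ε^3*y^2 + (-16:ℂ)*ε^3*β*v + ((-32:ℂ)/3)*ε^3*α*y + (16:ℂ)*ε^4*v^2 + ((16:ℂ)/3)*ε^4*y^2 + ((16:ℂ)/3)*ε^4*α*y) * hq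

lemma det3' (ε α β γ y v : ℂ) (hq : ε^2+ε+1=0)
    (hy : (1-ε)*y = ε*α-β) (hv : (1-ε)*v = α-β) :
    (hessG ε α β γ ![0,y,0,v]).det = -12*(α+ε*β+ε^2*γ)^2 := by
  rw [hess_eq']
  simp [Matrix.det_succ_row_zero, Fin.sum_univ_succ]
  linear_combination ((96:ℂ)*v + ((32:ℂ)/3)*y + (32:ℂ)*β + (-32:ℂ)*α + (48:ℂ)*ε*v + ((16:ℂ)/3)*ε*y + (-32:ℂ)*ε*γ + (48:ℂ)*ε*β + (-16:ℂ)*ε*α + (-16:ℂ)*ε^2*γ + (16:ℂ)*ε^2*β + ((-32:ℂ)/3)*ε^3*y + ((-16:ℂ)/3)*ε^4*y) * hy + ((32:ℂ)*γ + (-32:ℂ)*β + (16:ℂ)*ε*γ + (-48:ℂ)*ε*β + (32:ℂ)*ε*α + (-16:ℂ)*ε^2*β + (16:ℂ)*ε^2*α) * hv + ((-96:ℂ)*y*v + ((16:ℂ)/3)*y^2 + (-32:ℂ)*γ*v + (16:ℂ)*γ*y + (4:ℂ)*γ^2 + (-64:ℂ)*β*v + ((-80:ℂ)/3)*β*y +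 (-24:ℂ)*β*γ + (4:ℂ)*β^2 + (32:ℂ)*α*y + (32:ℂ)*α*γ + (12:ℂ)*α^2 + (128:ℂ)*ε*y*v + (-16:ℂ)*ε*y^2 + (48:ℂ)*ε*γ*v + (-16:ℂ)*ε*γ*y + (-12:ℂ)*ε*γ^2 + (16:ℂ)*ε*β*v + ((16:ℂ)/3)*ε*β*y + (32:ℂ)*ε*β*γ + (-4:ℂ)*ε*β^2 + (64:ℂ)*ε*α*v + ((-112:ℂ)/3)*ε*α*y + (-24:ℂ)*ε*α*γ + (-12:ℂ)*ε*α^2 + (16:ℂ)*ε^2*v^2 + (-16:ℂ)*ε^2*y*v + (16:ℂ)*ε^2*y^2 + (-16:ℂ)*ε^2*γ*v + (12:ℂ)*ε^2*γ^2 + (16:ℂ)*ε^2*β*v + ((64:ℂ)/3)*ε^2*β*y + (4:ℂ)*ε^2*β^2 + (-16:ℂ)*ε^2*α*v + ((32:ℂ)/3)*ε^2*α*y + (8:ℂ)*ε^2*α*β + (4:ℂ)*ε^2*α^2 + (-32:ℂ)*ε^3*v^2 + (-16:ℂ)*ε^3*y*v + ((-16:ℂ)/3)*ε^3*y^2 +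 (-16:ℂ)*ε^3*β*v + ((-16:ℂ)/3)*ε^3*α*y + (16:ℂ)*ε^4*v^2) * hq

/-- For the singular points `p₁, p₂, p₃` of `G`, the conditions `p₁ = p₂`, `p₂ = p₃`,
`p₁ = p₃` and `α + εβ + ε²γ = 0` are all equivalent; in particular, if
`α + εβ + ε²γ = 0` then `p₁ = p₂ = p₃`, while if `α + εβ + ε²γ ≠ 0` the three points
are pairwise distinct and the Hessian matrix of `G` is invertible at each of them
(each is an ordinary double point). -/
theorem stmt_17 (ε : ℂ) (hε : ε ≠ 1) (hε3 : ε ^ 3 = 1) (α β γ : ℂ)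
    (p₁ p₂ p₃ : Fin 4 → ℂ)
    (hp₁ : p₁ = ![0, (ε * β - γ) / (1 - ε), 0, (β - γ) / (ε * (1 - ε))])
    (hp₂ : p₂ = ![0, (ε ^ 2 * α - γ) / (1 - ε ^ 2), 0, (α - γ) / (1 - ε ^ 2)])
    (hp₃ : p₃ = ![0, (ε * α - β) / (1 - ε), 0, (α - β) / (1 - ε)]) :
    (p₁ = p₂ ↔ α + ε * β + ε ^ 2 * γ = 0) ∧
    (p₂ = p₃ ↔ α + ε * β + ε ^ 2 * γ = 0) ∧
    (p₁ = p₃ ↔ α + ε * β + ε ^ 2 * γ = 0) ∧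
    (α + ε * β + ε ^ 2 * γ = 0 → p₁ = p₂ ∧ p₂ = p₃) ∧
    (α + ε * β + ε ^ 2 * γ ≠ 0 →
      p₁ ≠ p₂ ∧ p₁ ≠ p₃ ∧ p₂ ≠ p₃ ∧
      IsUnit (hessG ε α β γ p₁) ∧ IsUnit (hessG ε α β γ p₂) ∧
      IsUnit (hessG ε α β γ p₃)) := by
  subst hp₁ hp₂ hp₃
  have h1 : (1:ℂ) - ε ≠ 0 := sub_ne_zero.mpr (Ne.symm hε)
  have he1 : ε - 1 ≠ 0 := sub_ne_zero.mpr hε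
  have hq : ε^2 + ε + 1 = 0 := by
    have hz : (ε-1)*(ε^2+ε+1) = 0 := by linear_combination hε3
    rcases mul_eq_zero.mp hz with h | h
    · exact absurd h he1
    · exact h
  have he0 : ε ≠ 0 := by
    intro h; rw [h] at hε3; norm_num at hε3
  have h2 : (1:ℂ) - ε^2 ≠ 0 := by
    have hrw : (1:ℂ) - ε^2 = (1-ε)*(-(ε^2)) := by linear_combination (1-ε)*hq
    rw [hrw]
    exact mul_ne_zero h1 (neg_ne_zero.mpr (pow_ne_zero 2 he0))
  have hd1 : ε*(1-ε) ≠ 0 := mul_ne_zero he0 h1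
  have iff12 : (![0, (ε * β - γ) / (1 - ε), 0, (β - γ) / (ε * (1 - ε))] : Fin 4 → ℂ)
      = ![0, (ε ^ 2 * α - γ) / (1 - ε ^ 2), 0, (α - γ) / (1 - ε ^ 2)]
      ↔ α + ε * β + ε ^ 2 * γ = 0 := by
    constructor
    · intro hE
      have h := congrFun hE 1
      simp only [Matrix.cons_val_one, Matrix.head_cons, Matrix.cons_val_zero] at h
      rw [div_eq_div_iff h1 h2] at h
      linear_combination (((1:ℂ)/3) + ((-1:ℂ)/3)*ε) * h + ((1:ℂ)*α + ((1:ℂ)/3)*ε*γ + ((2:ℂ)/3)*ε*β + (-1:ℂ)*ε*α + ((-1:ℂ)/3)*ε^2*β + ((1:ℂ)/3)*ε^2*α) * hq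
    · intro hS
      have e1 : ((ε * β - γ) / (1 - ε) : ℂ) = (ε ^ 2 * α - γ) / (1 - ε ^ 2) := by
        rw [div_eq_div_iff h1 h2]
        linear_combination ((2:ℂ) + (1:ℂ)*ε) * hS + ((-2:ℂ)*α + (-1:ℂ)*ε*γ + (-1:ℂ)*ε*β + (1:ℂ)*ε*α) * hq
      have e3 : ((β - γ) / (ε * (1 - ε)) : ℂ) = (α - γ) / (1 - ε ^ 2) := by
        rw [div_eq_div_iff hd1 h2]
        linear_combination ((-1:ℂ) + (-2:ℂ)*ε) * hS + ((-1:ℂ)*γ + (1:ℂ)*β + (1:ℂ)*α + (2:ℂ)*ε*γ) * hq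
      rw [e1, e3]
  have iff23 : (![0, (ε ^ 2 * α - γ) / (1 - ε ^ 2), 0, (α - γ) / (1 - ε ^ 2)] : Fin 4 → ℂ)
      = ![0, (ε * α - β) / (1 - ε), 0, (α - β) / (1 - ε)]
      ↔ α + ε * β + ε ^ 2 * γ = 0 := by
    constructor
    · intro hE
      have h := congrFun hE 1
      simp only [Matrix.cons_val_one, Matrix.head_cons, Matrix.cons_val_zero] at h
      rw [div_eq_div_iff h2 h1] at h
      linear_combination (((1:ℂ)/3) + ((2:ℂ)/3)*ε) * h + (((1:ℂ)/3)*γ + ((-1:ℂ)/3)*β + (1:ℂ)*α + ((2:ℂ)/3)*ε*β + ((-2:ℂ)/3)*ε*α) * hq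
    · intro hS
      have e1 : ((ε ^ 2 * α - γ) / (1 - ε ^ 2) : ℂ) = (ε * α - β) / (1 - ε) := by
        rw [div_eq_div_iff h2 h1]
        linear_combination ((-1:ℂ) + (-2:ℂ)*ε) * hS + ((-1:ℂ)*γ + (1:ℂ)*β + (1:ℂ)*α + (2:ℂ)*ε*γ) * hq
      have e3 : ((α - γ) / (1 - ε ^ 2) : ℂ) = (α - β) / (1 - ε) := by
        rw [div_eq_div_iff h2 h1]
        linear_combination ((-1:ℂ) + (-2:ℂ)*ε) * hS + ((-1:ℂ)*γ + (1:ℂ)*β + (1:ℂ)*α + (2:ℂ)*ε*γ) * hq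
      rw [e1, e3]
  have iff13 : (![0, (ε * β - γ) / (1 - ε), 0, (β - γ) / (ε * (1 - ε))] : Fin 4 → ℂ)
      = ![0, (ε * α - β) / (1 - ε), 0, (α - β) / (1 - ε)]
      ↔ α + ε * β + ε ^ 2 * γ = 0 := by
    constructor
    · intro hE
      have h := congrFun hE 1
      simp only [Matrix.cons_val_one, Matrix.head_cons, Matrix.cons_val_zero] at h
      rw [div_eq_div_iff h1 h1] at h
      linear_combination (((1:ℂ)/3) + ((2:ℂ)/3)*ε) * h + (((1:ℂ)/3)*γ + ((-1:ℂ)/3)*β + (1:ℂ)*α + ((2:ℂ)/3)*ε*β + ((-2:ℂ)/3)*ε*α) * hq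
    · intro hS
      have e1 : ((ε * β - γ) / (1 - ε) : ℂ) = (ε * α - β) / (1 - ε) := by
        rw [div_eq_div_iff h1 h1]
        linear_combination ((-1:ℂ) + (-2:ℂ)*ε) * hS + ((-1:ℂ)*γ + (1:ℂ)*β + (1:ℂ)*α + (2:ℂ)*ε*γ) * hq
      have e3 : ((β - γ) / (ε * (1 - ε)) : ℂ) = (α - β) / (1 - ε) := by
        rw [div_eq_div_iff hd1 h1]
        linear_combination ((-1:ℂ) + (-2:ℂ)*ε) * hS + ((-1:ℂ)*γ + (1:ℂ)*β + (1:ℂ)*α + (2:ℂ)*ε*γ) * hq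
      rw [e1, e3]
  refine ⟨iff12, iff23, iff13, fun hS => ⟨iff12.mpr hS, iff23.mpr hS⟩, fun hS => ?_⟩
  have hdet1 : (hessG ε α β γ ![0, (ε * β - γ) / (1 - ε), 0, (β - γ) / (ε * (1 - ε))]).det
      = -12*(α+ε*β+ε^2*γ)^2 :=
    det1' ε α β γ _ _ hq (by field_simp) (by field_simp)
  have hdet2 : (hessG ε α β γ ![0, (ε ^ 2 * α - γ) / (1 - ε ^ 2), 0, (α - γ) / (1 - ε ^ 2)]).det
      = -12*(α+ε*β+ε^2*γ)^2 :=
    det2' ε α β γ _ _ hq (by field_simp) (by field_simp)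
  have hdet3 : (hessG ε α β γ ![0, (ε * α - β) / (1 - ε), 0, (α - β) / (1 - ε)]).det
      = -12*(α+ε*β+ε^2*γ)^2 :=
    det3' ε α β γ _ _ hq (by field_simp) (by field_simp)
  have hne : (-12:ℂ)*(α+ε*β+ε^2*γ)^2 ≠ 0 :=
    mul_ne_zero (by norm_num) (pow_ne_zero 2 hS)
  refine ⟨fun h => hS (iff12.mp h), fun h => hS (iff13.mp h), fun h => hS (iff23.mp h),
    ?_, ?_, ?_⟩
  · rw [Matrix.isUnit_iff_isUnit_det, hdet1, isUnit_iff_ne_zero]; exact hne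
  · rw [Matrix.isUnit_iff_isUnit_det, hdet2, isUnit_iff_ne_zero]; exact hne
  · rw [Matrix.isUnit_iff_isUnit_det, hdet3, isUnit_iff_ne_zero]; exact hne
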